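/- arXiv:1006.0329 — 2 statements merged into one kernel-verified Lean document; each statement's English description precedes it below -/
import Mathlib

section
/- Let N = 2M+1, M ≥ 1, ρ > 0, R_0 > 0, and S = T_θ^T S_{R_0} as above. Then S^T S = (N/2)·diag(2, (R_0/ρ)², (R_0/ρ)², ..., (R_0/ρ)^{2M}, (R_0/ρ)^{2M}), and consequently ‖S‖₂² = (N/2)·max{2, (R_0/ρ)², (R_0/ρ)^{2M}} and ‖S^{-1}‖₂² = [(N/2)·min{2, (R_0/ρ)², (R_0/ρ)^{2M}}]^{-1}. -/
/-!
The rows of `T_θ` are `1`, `cos kθ` and `sin kθ` (`1 ≤ k ≤ M`) sampled at the `N`-th roots of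
unity. Since `∑ⱼ exp (i m θⱼ)` vanishes unless `N ∣ m`, and `|k ± l| < N` for frequencies
`k, l ≤ M`, the product-to-sum formulas make the rows orthogonal:
`T_θ T_θᵀ = (N/2) · diag(2, 1, …, 1)`. Hence `SᵀS = S_{R₀} T_θ T_θᵀ S_{R₀}` is diagonal, and the
two norms follow from `‖A‖² = ‖AᴴA‖`, `‖A⁻¹‖² = ‖(AᴴA)⁻¹‖` and the fact that the spectral norm of
a diagonal matrix is its largest entry in absolute value. As `k ↦ (R₀/ρ)^{2k}` is monotone, its
extreme values on `1 ≤ k ≤ M` are taken at `k = 1` and `k = M`.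
-/

open Matrix
open scoped Matrix.Norms.L2Operator

noncomputable section

/-- Equispaced collocation angles `θ_j = 2π(j-1)/N` (0-based: `θ_j = 2πj/N`). -/
def theta (N : ℕ) (j : Fin N) : ℝ := 2 * Real.pi * j / N

/-- The trigonometric collocation matrix `T_θ ∈ ℝ^{(2M+1)×(2M+1)}`:
row `1` (index 0) is all ones, row `2k` is `cos(kθ_j)`, row `2k+1` is `sin(kθ_j)`.
In 0-based indexing, the frequency of row `i ≥ 1` is `k = (i+1)/2`. -/
def Ttheta (M : ℕ) : Matrix (Fin (2*M+1)) (Fin (2*M+1)) ℝ := fun i j =>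
  if i.val = 0 then 1
  else if i.val % 2 = 1 then Real.cos ((((i.val+1)/2 : ℕ) : ℝ) * theta (2*M+1) j)
  else Real.sin ((((i.val+1)/2 : ℕ) : ℝ) * theta (2*M+1) j)

/-- The diagonal matrix `S_{R₀} = diag(1, (R₀/ρ), (R₀/ρ), …, (R₀/ρ)^M, (R₀/ρ)^M)`:
the diagonal entry at (0-based) index `i ≥ 1` is `(R₀/ρ)^k` with `k = (i+1)/2`. -/
def SR (M : ℕ) (ρ R₀ : ℝ) : Matrix (Fin (2*M+1)) (Fin (2*M+1)) ℝ :=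
  Matrix.diagonal (fun i : Fin (2*M+1) =>
    if i.val = 0 then 1 else (R₀ / ρ) ^ ((i.val+1)/2 : ℕ))

open Real

theorem sum_exp_mul_theta_mul_I (N : ℕ) (m : ℤ) :
    ∑ j : Fin N, Complex.exp ((m * theta N j : ℝ) * Complex.I) =
      if (N : ℤ) ∣ m then (N : ℂ) else 0 := by
  rcases Nat.eq_zero_or_pos N with rfl | hN
  · simp
  set ζ : ℂ := Complex.exp (2 * π * Complex.I / N) ^ m
  have hζ := Complex.isPrimitiveRoot_exp N hN.ne'
  have hpow : ∀ j : Fin N, Complex.exp ((m * theta N j : ℝ) * Complex.I) = ζ ^ (j : ℕ) := by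
    intro j
    rw [← zpow_natCast, ← _root_.zpow_mul, ← Complex.exp_int_mul]
    congr 1
    simp only [theta]
    push_cast
    ring
  simp_rw [hpow, Fin.sum_univ_eq_sum_range (ζ ^ ·)]
  split_ifs with hdvd
  · simp [ζ, (hζ.zpow_eq_one_iff_dvd m).2 hdvd]
  · have hζ1 : ζ ≠ 1 := mt (hζ.zpow_eq_one_iff_dvd m).1 hdvd
    have hζN : ζ ^ N = 1 := by
      rw [← zpow_natCast, ← _root_.zpow_mul, mul_comm m, _root_.zpow_mul, hζ.zpow_eq_one,
        _root_.one_zpow]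
    rw [geom_sum_eq hζ1, hζN, sub_self, zero_div]

theorem Int.dvd_iff_eq_zero_of_abs_lt {d m : ℤ} (h : |m| < d) : d ∣ m ↔ m = 0 :=
  ⟨fun hdvd => Int.eq_zero_of_abs_lt_dvd hdvd h, fun hm => hm ▸ dvd_zero _⟩

theorem sum_cos_intCast_mul_theta (N : ℕ) (m : ℤ) :
    ∑ j : Fin N, cos (m * theta N j) = if (N : ℤ) ∣ m then (N : ℝ) else 0 := by
  have h := congrArg Complex.re (sum_exp_mul_theta_mul_I N m)
  simp only [Complex.re_sum, Complex.exp_ofReal_mul_I_re] at h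
  rw [h]
  split_ifs <;> simp

theorem sum_sin_intCast_mul_theta (N : ℕ) (m : ℤ) : ∑ j : Fin N, sin (m * theta N j) = 0 := by
  have h := congrArg Complex.im (sum_exp_mul_theta_mul_I N m)
  simp only [Complex.im_sum, Complex.exp_ofReal_mul_I_im] at h
  rw [h]
  split_ifs <;> simp

theorem sum_cos_mul_cos_theta {N k l : ℕ} (h : k + l < N) :
    ∑ j : Fin N, cos (k * theta N j) * cos (l * theta N j) =
      if k = l then (if k = 0 then (N : ℝ) else N / 2) else 0 := by
  have hprod (j : Fin N) : cos (k * theta N j) * cos (l * theta N j) =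
      (cos (((k - l : ℤ) : ℝ) * theta N j) + cos (((k + l : ℤ) : ℝ) * theta N j)) / 2 := by
    push_cast
    rw [sub_mul, add_mul, cos_sub, cos_add]
    ring
  simp_rw [hprod, ← Finset.sum_div, Finset.sum_add_distrib, sum_cos_intCast_mul_theta]
  simp only [Int.dvd_iff_eq_zero_of_abs_lt (d := N) (m := (k : ℤ) - l) (by rw [abs_lt]; omega),
    Int.dvd_iff_eq_zero_of_abs_lt (d := N) (m := (k : ℤ) + l) (by rw [abs_lt]; omega)]
  split_ifs <;> first | omega | ring

theorem sum_sin_mul_sin_theta {N k l : ℕ} (h : k + l < N) :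
    ∑ j : Fin N, sin (k * theta N j) * sin (l * theta N j) =
      if k = l ∧ k ≠ 0 then (N : ℝ) / 2 else 0 := by
  have hprod (j : Fin N) : sin (k * theta N j) * sin (l * theta N j) =
      (cos (((k - l : ℤ) : ℝ) * theta N j) - cos (((k + l : ℤ) : ℝ) * theta N j)) / 2 := by
    push_cast
    rw [sub_mul, add_mul, cos_sub, cos_add]
    ring
  simp_rw [hprod, ← Finset.sum_div, Finset.sum_sub_distrib, sum_cos_intCast_mul_theta]
  simp only [Int.dvd_iff_eq_zero_of_abs_lt (d := N) (m := (k : ℤ) - l) (by rw [abs_lt]; omega),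
    Int.dvd_iff_eq_zero_of_abs_lt (d := N) (m := (k : ℤ) + l) (by rw [abs_lt]; omega)]
  split_ifs <;> first | omega | ring

theorem sum_sin_mul_cos_theta (N k l : ℕ) :
    ∑ j : Fin N, sin (k * theta N j) * cos (l * theta N j) = 0 := by
  have hprod (j : Fin N) : sin (k * theta N j) * cos (l * theta N j) =
      (sin (((k - l : ℤ) : ℝ) * theta N j) + sin (((k + l : ℤ) : ℝ) * theta N j)) / 2 := by
    push_cast
    rw [sub_mul, add_mul, sin_sub, sin_add]
    ring
  simp_rw [hprod, ← Finset.sum_div, Finset.sum_add_distrib, sum_sin_intCast_mul_theta]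
  norm_num

theorem Ttheta_apply_of_cos_row {M : ℕ} {i : Fin (2 * M + 1)}
    (hi : (i : ℕ) = 0 ∨ (i : ℕ) % 2 = 1) (j : Fin (2 * M + 1)) :
    Ttheta M i j = cos (((i + 1) / 2 : ℕ) * theta (2 * M + 1) j) := by
  rcases hi with hi | hi
  · simp [Ttheta, hi]
  · simp [Ttheta, hi, show (i : ℕ) ≠ 0 by omega]

theorem Ttheta_apply_of_sin_row {M : ℕ} {i : Fin (2 * M + 1)}
    (hi : (i : ℕ) ≠ 0 ∧ (i : ℕ) % 2 = 0) (j : Fin (2 * M + 1)) :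
    Ttheta M i j = sin (((i + 1) / 2 : ℕ) * theta (2 * M + 1) j) := by
  simp [Ttheta, hi.1, hi.2]

theorem Ttheta_mul_transpose (M : ℕ) :
    Ttheta M * (Ttheta M)ᵀ = diagonal fun i : Fin (2 * M + 1) =>
      if (i : ℕ) = 0 then ((2 * M + 1 : ℕ) : ℝ) else ((2 * M + 1 : ℕ) : ℝ) / 2 := by
  ext i l
  have hlt : ((i : ℕ) + 1) / 2 + ((l : ℕ) + 1) / 2 < 2 * M + 1 := by omega
  have hrow (n : Fin (2 * M + 1)) :
      ((n : ℕ) = 0 ∨ (n : ℕ) % 2 = 1) ∨ ((n : ℕ) ≠ 0 ∧ (n : ℕ) % 2 = 0) := by omega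
  simp only [mul_apply, transpose_apply, diagonal_apply, Fin.ext_iff]
  rcases hrow i with hi | hi <;> rcases hrow l with hl | hl
  · simp only [Ttheta_apply_of_cos_row hi, Ttheta_apply_of_cos_row hl, sum_cos_mul_cos_theta hlt]
    split_ifs <;> first | rfl | omega
  · simp only [Ttheta_apply_of_cos_row hi, Ttheta_apply_of_sin_row hl, mul_comm (cos _),
      sum_sin_mul_cos_theta]
    split_ifs <;> first | rfl | omega
  · simp only [Ttheta_apply_of_sin_row hi, Ttheta_apply_of_cos_row hl, sum_sin_mul_cos_theta]
    split_ifs <;> first | rfl | omega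
  · simp only [Ttheta_apply_of_sin_row hi, Ttheta_apply_of_sin_row hl, sum_sin_mul_sin_theta hlt]
    split_ifs <;> first | rfl | omega

section PowBounds

variable {R : Type*} [Semiring R] [LinearOrder R] [IsStrictOrderedRing R] {x : R} {k M : ℕ}

theorem pow_le_max_pow (hx : 0 ≤ x) (hk : 1 ≤ k) (hkM : k ≤ M) : x ^ k ≤ max x (x ^ M) := by
  rcases le_total 1 x with h | h
  · exact (pow_le_pow_right₀ h hkM).trans (le_max_right _ _)
  · exact (pow_le_pow_of_le_one hx h hk).trans (by rw [pow_one]; exact le_max_left _ _)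

theorem min_pow_le_pow (hx : 0 ≤ x) (hk : 1 ≤ k) (hkM : k ≤ M) : min x (x ^ M) ≤ x ^ k := by
  rcases le_total 1 x with h | h
  · exact (min_le_left _ _).trans (by simpa using pow_le_pow_right₀ h hk)
  · exact (min_le_right _ _).trans (pow_le_pow_of_le_one hx h hkM)

end PowBounds

def gramWeight (M : ℕ) (q : ℝ) (i : Fin (2 * M + 1)) : ℝ :=
  if (i : ℕ) = 0 then 2 else q ^ (2 * (((i : ℕ) + 1) / 2))

section GramWeight

variable {M : ℕ} {q : ℝ}

theorem gramWeight_pos (hq : q ≠ 0) (i : Fin (2 * M + 1)) : 0 < gramWeight M q i := by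
  unfold gramWeight
  split_ifs
  · norm_num
  · exact (even_two_mul _).pow_pos hq

theorem subset_range_gramWeight (hM : 1 ≤ M) (q : ℝ) :
    {2, q ^ 2, q ^ (2 * M)} ⊆ Set.range (gramWeight M q) := by
  rintro _ (rfl | rfl | rfl)
  · exact ⟨⟨0, by omega⟩, by simp [gramWeight]⟩
  · exact ⟨⟨1, by omega⟩, by simp [gramWeight]⟩
  · exact ⟨⟨2 * M, by omega⟩, by simp [gramWeight, show 2 * M ≠ 0 by omega,
      show (2 * M + 1) / 2 = M by omega]⟩

theorem isGreatest_range_gramWeight (hM : 1 ≤ M) (q : ℝ) :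
    IsGreatest (Set.range (gramWeight M q)) (max 2 (max (q ^ 2) (q ^ (2 * M)))) := by
  have hsub := subset_range_gramWeight hM q
  refine ⟨max_rec' _ (hsub (by simp)) (max_rec' _ (hsub (by simp)) (hsub (by simp))), ?_⟩
  rintro _ ⟨i, rfl⟩
  unfold gramWeight
  split_ifs
  · exact le_max_left _ _
  · rw [pow_mul, pow_mul]
    exact (pow_le_max_pow (sq_nonneg q) (by omega) (by omega)).trans (le_max_right _ _)

theorem isLeast_range_gramWeight (hM : 1 ≤ M) (q : ℝ) :
    IsLeast (Set.range (gramWeight M q)) (min 2 (min (q ^ 2) (q ^ (2 * M)))) := by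
  have hsub := subset_range_gramWeight hM q
  refine ⟨min_rec' _ (hsub (by simp)) (min_rec' _ (hsub (by simp)) (hsub (by simp))), ?_⟩
  rintro _ ⟨i, rfl⟩
  unfold gramWeight
  split_ifs
  · exact min_le_left _ _
  · rw [pow_mul, pow_mul]
    exact (min_le_right _ _).trans (min_pow_le_pow (sq_nonneg q) (by omega) (by omega))

end GramWeight

theorem Ttheta_SR_transpose_mul_self (M : ℕ) (ρ R₀ : ℝ) :
    ((Ttheta M)ᵀ * SR M ρ R₀)ᵀ * ((Ttheta M)ᵀ * SR M ρ R₀) =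
      (((2 * M + 1 : ℕ) : ℝ) / 2) • diagonal (gramWeight M (R₀ / ρ)) := by
  rw [transpose_mul, transpose_transpose, SR, diagonal_transpose, Matrix.mul_assoc,
    ← Matrix.mul_assoc (Ttheta M), Ttheta_mul_transpose, diagonal_mul_diagonal,
    diagonal_mul_diagonal, ← diagonal_smul]
  congr 1
  funext i
  simp only [Pi.smul_apply, smul_eq_mul, gramWeight]
  split_ifs
  · ring
  · rw [pow_mul, sq, mul_pow]
    ring

section l2OpNorm

variable {𝕜 n : Type*} [RCLike 𝕜] [Fintype n] [DecidableEq n]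

theorem l2_opNorm_diagonal_eq_of_isGreatest {v : n → 𝕜} {a : ℝ}
    (h : IsGreatest (Set.range fun i => ‖v i‖) a) : ‖(diagonal v : Matrix n n 𝕜)‖ = a := by
  obtain ⟨⟨i, hi⟩, hle⟩ := h
  rw [l2_opNorm_diagonal]
  refine le_antisymm ((pi_norm_le_iff_of_nonneg (hi ▸ norm_nonneg _)).2 fun j => hle ⟨j, rfl⟩) ?_
  exact hi ▸ norm_le_pi_norm v i

theorem l2_opNorm_sq_eq_conjTranspose_mul_self {m : Type*} [Fintype m] [DecidableEq m]
    (A : Matrix m n 𝕜) : ‖A‖ ^ 2 = ‖Aᴴ * A‖ := by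
  rw [sq, l2_opNorm_conjTranspose_mul_self]

theorem l2_opNorm_inv_sq_eq_inv_conjTranspose_mul_self (A : Matrix n n 𝕜) :
    ‖A⁻¹‖ ^ 2 = ‖(Aᴴ * A)⁻¹‖ := by
  rw [Matrix.mul_inv_rev, ← conjTranspose_nonsing_inv, ← l2_opNorm_conjTranspose A⁻¹,
    l2_opNorm_sq_eq_conjTranspose_mul_self, conjTranspose_conjTranspose]

end l2OpNorm

theorem inv_diagonal_of_ne_zero {n K : Type*} [Fintype n] [DecidableEq n] [Field K]
    {v : n → K} (hv : ∀ i, v i ≠ 0) : (diagonal v)⁻¹ = diagonal fun i => (v i)⁻¹ := by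
  refine inv_eq_right_inv ?_
  rw [diagonal_mul_diagonal, ← diagonal_one]
  exact congrArg diagonal (funext fun i => mul_inv_cancel₀ (hv i))

theorem IsGreatest.range_norm_const_mul {ι : Type*} {w : ι → ℝ} {a c : ℝ} (hw : ∀ i, 0 ≤ w i)
    (hc : 0 ≤ c) (h : IsGreatest (Set.range w) a) :
    IsGreatest (Set.range fun i => ‖c * w i‖) (c * a) := by
  have hnorm : (fun i => ‖c * w i‖) = (c * ·) ∘ w :=
    funext fun i => Real.norm_of_nonneg (mul_nonneg hc (hw i))
  rw [hnorm, Set.range_comp]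
  exact (monotone_mul_left_of_nonneg hc).map_isGreatest h

theorem IsLeast.range_norm_inv_const_mul {ι : Type*} {w : ι → ℝ} {a c : ℝ} (hw : ∀ i, 0 < w i)
    (hc : 0 < c) (h : IsLeast (Set.range w) a) :
    IsGreatest (Set.range fun i => ‖(c * w i)⁻¹‖) (c * a)⁻¹ := by
  obtain ⟨⟨i, rfl⟩, hle⟩ := h
  have hnorm (j : ι) : ‖(c * w j)⁻¹‖ = (c * w j)⁻¹ :=
    Real.norm_of_nonneg (inv_nonneg.2 (mul_pos hc (hw j)).le)
  refine ⟨⟨i, hnorm i⟩, ?_⟩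
  rintro _ ⟨j, rfl⟩
  refine (hnorm j).trans_le ?_
  exact inv_anti₀ (mul_pos hc (hw i)) (mul_le_mul_of_nonneg_left (hle ⟨j, rfl⟩) hc.le)

/-- For `S = T_θᵀ S_{R₀}`: `SᵀS = (N/2)·diag(2, (R₀/ρ)², (R₀/ρ)², …, (R₀/ρ)^{2M}, (R₀/ρ)^{2M})`,
hence `‖S‖₂² = (N/2)·max{2, (R₀/ρ)², (R₀/ρ)^{2M}}` and
`‖S⁻¹‖₂² = [(N/2)·min{2, (R₀/ρ)², (R₀/ρ)^{2M}}]⁻¹`. -/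
theorem S_transpose_mul_and_norms (M : ℕ) (hM : 1 ≤ M) (ρ R₀ : ℝ)
    (hρ : 0 < ρ) (hR₀ : 0 < R₀) :
    ((Ttheta M)ᵀ * SR M ρ R₀)ᵀ * ((Ttheta M)ᵀ * SR M ρ R₀) =
      (((2*M+1 : ℕ) : ℝ) / 2) •
        Matrix.diagonal (fun i : Fin (2*M+1) =>
          if i.val = 0 then 2 else (R₀ / ρ) ^ (2 * ((i.val+1)/2 : ℕ))) ∧
    ‖(Ttheta M)ᵀ * SR M ρ R₀‖ ^ 2 =
      (((2*M+1 : ℕ) : ℝ) / 2) * max 2 (max ((R₀/ρ) ^ 2) ((R₀/ρ) ^ (2*M))) ∧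
    ‖((Ttheta M)ᵀ * SR M ρ R₀)⁻¹‖ ^ 2 =
      ((((2*M+1 : ℕ) : ℝ) / 2) * min 2 (min ((R₀/ρ) ^ 2) ((R₀/ρ) ^ (2*M))))⁻¹ := by
  set S := (Ttheta M)ᵀ * SR M ρ R₀
  set c : ℝ := ((2 * M + 1 : ℕ) : ℝ) / 2
  set w := gramWeight M (R₀ / ρ)
  have hc : 0 < c := by positivity
  have hw : ∀ i, 0 < w i := gramWeight_pos (div_pos hR₀ hρ).ne'
  have hgram : Sᴴ * S = c • diagonal w := by
    rw [conjTranspose_eq_transpose_of_trivial]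
    exact Ttheta_SR_transpose_mul_self M ρ R₀
  refine ⟨Ttheta_SR_transpose_mul_self M ρ R₀, ?_, ?_⟩
  · rw [l2_opNorm_sq_eq_conjTranspose_mul_self, hgram, ← diagonal_smul]
    exact l2_opNorm_diagonal_eq_of_isGreatest <|
      (isGreatest_range_gramWeight hM _).range_norm_const_mul (fun i => (hw i).le) hc.le
  · rw [l2_opNorm_inv_sq_eq_inv_conjTranspose_mul_self, hgram, ← diagonal_smul,
      inv_diagonal_of_ne_zero (v := c • w) fun i => (mul_pos hc (hw i)).ne']
    exact l2_opNorm_diagonal_eq_of_isGreatest <|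
      (isLeast_range_gramWeight hM _).range_norm_inv_const_mul hw hc
end
end

section
/- Under the setting of the previous theorem (M ≥ 1, ρ > 0 fixed), the function R_0 ↦ cond₂(S) attains its minimum at R_0 = 2^{1/(2M)}·ρ, and the minimum value is 2^{(M-1)/(2M)}, which is strictly less than √2. -/
/-!
Discrete orthogonality of the rows `1, cos kθ, sin kθ` on `2M+1` equispaced nodes gives
`T_θ T_θᵀ = diag(2M+1, (2M+1)/2, …, (2M+1)/2)`. Hence `A = T_θᵀ S` satisfies `AᵀA = diag(e)` with
`e = (2M+1) · (1, y/2, y/2, …, y^M/2, y^M/2)`, `y = (R₀/ρ)²`, and `cond₂(A)² = max e / min e`.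
This ratio is at least `max(2/y, y^(M-1))`; the two bounds cross at `y^M = 2`, i.e.
`R₀ = 2^{1/(2M)} ρ`, where the ratio equals `2^{(M-1)/M}`.
-/

open Matrix
open scoped Matrix.Norms.L2Operator

noncomputable section

open Real

section ConditionNumber

variable {𝕜 n : Type*} [RCLike 𝕜] [Fintype n] [DecidableEq n]

theorem Matrix.l2_opNorm_sq_of_conjTranspose_mul_self_eq_diagonal {A : Matrix n n 𝕜}
    {e : n → 𝕜} (h : Aᴴ * A = diagonal e) : ‖A‖ ^ 2 = ‖e‖ := by
  rw [sq, ← l2_opNorm_conjTranspose_mul_self, h, l2_opNorm_diagonal]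

theorem Matrix.l2_opNorm_inv_sq_of_conjTranspose_mul_self_eq_diagonal {A : Matrix n n 𝕜}
    {e : n → 𝕜} (h : Aᴴ * A = diagonal e) (he : ∀ i, e i ≠ 0) : ‖A⁻¹‖ ^ 2 = ‖e⁻¹‖ := by
  have hinv : A⁻¹ * A⁻¹ᴴ = diagonal e⁻¹ := by
    rw [conjTranspose_nonsing_inv, ← mul_inv_rev, h]
    refine inv_eq_left_inv ?_
    rw [diagonal_mul_diagonal, ← diagonal_one]
    exact congrArg diagonal (funext fun i => inv_mul_cancel₀ (he i))
  rw [← l2_opNorm_conjTranspose]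
  exact l2_opNorm_sq_of_conjTranspose_mul_self_eq_diagonal (by rwa [conjTranspose_conjTranspose])

theorem Matrix.l2_opNorm_mul_l2_opNorm_inv_sq {A : Matrix n n 𝕜}
    {e : n → 𝕜} (h : Aᴴ * A = diagonal e) (he : ∀ i, e i ≠ 0) :
    (‖A‖ * ‖A⁻¹‖) ^ 2 = ‖e‖ * ‖e⁻¹‖ := by
  rw [mul_pow, l2_opNorm_sq_of_conjTranspose_mul_self_eq_diagonal h,
    l2_opNorm_inv_sq_of_conjTranspose_mul_self_eq_diagonal h he]

end ConditionNumber

section PiNorm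

variable {ι : Type*} [Fintype ι]

theorem div_le_pi_norm_mul_pi_norm_inv (e : ι → ℝ) (i j : ι) : e i / e j ≤ ‖e‖ * ‖e⁻¹‖ :=
  calc e i / e j ≤ ‖e i‖ * ‖(e⁻¹) j‖ := by
        rw [← norm_mul, div_eq_mul_inv]; exact Real.le_norm_self _
    _ ≤ ‖e‖ * ‖e⁻¹‖ := by gcongr <;> exact norm_le_pi_norm _ _

theorem pi_norm_mul_pi_norm_inv_eq_div {e : ι → ℝ} {i₀ j₀ : ι} (hmax : ∀ i, e i ≤ e i₀)
    (hmin : ∀ i, e j₀ ≤ e i) (hpos : 0 < e j₀) : ‖e‖ * ‖e⁻¹‖ = e i₀ / e j₀ := by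
  have hnorm : ‖e‖ = e i₀ := by
    refine le_antisymm ((pi_norm_le_iff_of_nonneg (hpos.le.trans (hmin i₀))).2 fun i => ?_) ?_
    · rw [Real.norm_of_nonneg (hpos.le.trans (hmin i))]; exact hmax i
    · exact (Real.le_norm_self _).trans (norm_le_pi_norm e i₀)
  have hnorm_inv : ‖e⁻¹‖ = (e j₀)⁻¹ := by
    refine le_antisymm ((pi_norm_le_iff_of_nonneg (inv_nonneg.2 hpos.le)).2 fun i => ?_) ?_
    · rw [Pi.inv_apply, norm_inv, Real.norm_of_nonneg (hpos.le.trans (hmin i))]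
      exact inv_anti₀ hpos (hmin i)
    · exact (Real.le_norm_self _).trans (norm_le_pi_norm e⁻¹ j₀)
  rw [hnorm, hnorm_inv, div_eq_mul_inv]

end PiNorm

section Orthogonality

theorem sum_cos_int_mul_theta_sub {N : ℕ} (hN : N ≠ 0) (m : ℤ) (α : ℝ) :
    ∑ j : Fin N, cos (m * theta N j - α) = if (N : ℤ) ∣ m then N * cos α else 0 := by
  split_ifs with hm
  · obtain ⟨q, rfl⟩ := hm
    have hterm (j : Fin N) : cos (((N * q : ℤ) : ℝ) * theta N j - α) = cos α := by
      rw [show ((N * q : ℤ) : ℝ) * theta N j - α = -α + ((q * j : ℤ) : ℝ) * (2 * π) by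
        unfold theta; push_cast; field_simp; ring]
      rw [cos_add_int_mul_two_pi, cos_neg]
    rw [Finset.sum_congr rfl fun j _ => hterm j]
    simp
  · set ζ := Complex.exp (2 * π * Complex.I / N) with hζ_def
    have hζ : IsPrimitiveRoot ζ N := Complex.isPrimitiveRoot_exp N hN
    have hgeom : ∑ j : Fin N, (ζ ^ m) ^ (j : ℕ) = 0 := by
      rw [Fin.sum_univ_eq_sum_range (fun j => (ζ ^ m) ^ j),
        geom_sum_eq ((hζ.zpow_eq_one_iff_dvd m).not.2 hm), ← zpow_natCast, ← _root_.zpow_mul,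
        mul_comm, _root_.zpow_mul, zpow_natCast, hζ.pow_eq_one, _root_.one_zpow, sub_self, zero_div]
    calc ∑ j : Fin N, cos (m * theta N j - α)
        = (∑ j : Fin N, Complex.exp (((m * theta N j - α : ℝ) : ℂ) * Complex.I)).re := by
          simp only [Complex.re_sum, Complex.exp_ofReal_mul_I_re]
      _ = (Complex.exp (-α * Complex.I) * ∑ j : Fin N, (ζ ^ m) ^ (j : ℕ)).re := by
          rw [Finset.mul_sum]
          congr 1
          refine Finset.sum_congr rfl fun j _ => ?_
          rw [hζ_def, ← Complex.exp_int_mul, ← Complex.exp_nat_mul, ← Complex.exp_add]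
          unfold theta
          push_cast
          ring_nf
      _ = 0 := by rw [hgeom, mul_zero, Complex.zero_re]

theorem sum_cos_mul_cos_nat_mul_theta_sub {N : ℕ} (hN : N ≠ 0) (k l : ℕ) (φ ψ : ℝ) :
    ∑ j : Fin N, cos (k * theta N j - φ) * cos (l * theta N j - ψ) =
      ((if (N : ℤ) ∣ (k - l : ℤ) then N * cos (φ - ψ) else 0) +
        (if (N : ℤ) ∣ (k + l : ℤ) then N * cos (φ + ψ) else 0)) / 2 := by
  have hprod (j : Fin N) : cos (k * theta N j - φ) * cos (l * theta N j - ψ) =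
      (cos (((k - l : ℤ) : ℝ) * theta N j - (φ - ψ)) +
        cos (((k + l : ℤ) : ℝ) * theta N j - (φ + ψ))) / 2 := by
    have cos_mul_cos (a b : ℝ) : cos a * cos b = (cos (a - b) + cos (a + b)) / 2 := by
      rw [cos_sub, cos_add]; ring
    rw [cos_mul_cos]
    congr 3 <;> push_cast <;> ring
  simp only [hprod, ← Finset.sum_div, Finset.sum_add_distrib, sum_cos_int_mul_theta_sub hN]

def rowPhase {n : ℕ} (i : Fin n) : ℝ := if i.val ≠ 0 ∧ i.val % 2 = 0 then π / 2 else 0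

theorem Ttheta_apply_eq_cos (M : ℕ) (i j : Fin (2*M+1)) :
    Ttheta M i j = cos (((i.val + 1) / 2 : ℕ) * theta (2*M+1) j - rowPhase i) := by
  unfold Ttheta rowPhase
  split_ifs <;> simp_all [cos_sub_pi_div_two]

def trigWeight (M : ℕ) (i : Fin (2*M+1)) : ℝ := if i.val = 0 then 2*M+1 else (2*M+1)/2

theorem Ttheta_mul_transpose_s16 (M : ℕ) : Ttheta M * (Ttheta M)ᵀ = diagonal (trigWeight M) := by
  ext i i'
  have hi := i.isLt
  have hi' := i'.isLt
  have hdiff : ((2*M+1 : ℕ) : ℤ) ∣ (((i.val+1)/2 : ℕ) - ((i'.val+1)/2 : ℕ) : ℤ) ↔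
      (i.val+1)/2 = (i'.val+1)/2 := by
    refine ⟨fun h => ?_, fun h => by rw [h, sub_self]; exact dvd_zero _⟩
    have := Int.eq_zero_of_abs_lt_dvd h (by rw [abs_lt]; constructor <;> omega)
    omega
  have hsum : ((2*M+1 : ℕ) : ℤ) ∣ (((i.val+1)/2 : ℕ) + ((i'.val+1)/2 : ℕ) : ℤ) ↔
      i.val = 0 ∧ i'.val = 0 := by
    refine ⟨fun h => ?_, fun h => by simp [h]⟩
    have := Int.eq_zero_of_abs_lt_dvd h (by rw [abs_lt]; constructor <;> omega)
    omega
  rw [mul_apply]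
  simp only [transpose_apply, Ttheta_apply_eq_cos]
  rw [sum_cos_mul_cos_nat_mul_theta_sub (by omega)]
  simp only [hdiff, hsum]
  rcases eq_or_ne i i' with rfl | hne
  · rw [diagonal_apply_eq, trigWeight, rowPhase]
    by_cases h0 : i.val = 0 <;> simp [h0]
  · rw [diagonal_apply_ne _ hne, if_neg (show ¬ (i.val = 0 ∧ i'.val = 0) from
      fun h => hne (Fin.ext (by omega)))]
    split_ifs with hkl
    · have hne' : i.val ≠ i'.val := fun h => hne (Fin.ext h)
      have hphase : cos (rowPhase i - rowPhase i') = 0 := by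
        unfold rowPhase
        split_ifs <;> simp <;> omega
      rw [hphase]
      simp
    · simp

end Orthogonality

section Gram

theorem SR_eq_diagonal_pow (M : ℕ) (ρ R₀ : ℝ) :
    SR M ρ R₀ = diagonal (fun i : Fin (2*M+1) => (R₀ / ρ) ^ ((i.val + 1) / 2)) := by
  unfold SR
  congr 1
  funext i
  split_ifs with h <;> simp [h]

def gramDiag (M : ℕ) (y : ℝ) (i : Fin (2*M+1)) : ℝ := trigWeight M i * y ^ ((i.val + 1) / 2)

theorem conjTranspose_mul_self_transpose_Ttheta_mul_SR (M : ℕ) (ρ R₀ : ℝ) :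
    ((Ttheta M)ᵀ * SR M ρ R₀)ᴴ * ((Ttheta M)ᵀ * SR M ρ R₀) =
      diagonal (gramDiag M ((R₀ / ρ) ^ 2)) := by
  rw [SR_eq_diagonal_pow, conjTranspose_eq_transpose_of_trivial, transpose_mul,
    transpose_transpose, diagonal_transpose, Matrix.mul_assoc, ← Matrix.mul_assoc (Ttheta M),
    Ttheta_mul_transpose_s16, diagonal_mul_diagonal, diagonal_mul_diagonal]
  congr 1
  funext i
  rw [gramDiag, ← pow_mul']
  ring

theorem gramDiag_apply_zero (M : ℕ) (y : ℝ) : gramDiag M y ⟨0, by omega⟩ = 2 * M + 1 := by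
  simp [gramDiag, trigWeight]

theorem gramDiag_apply_of_ne_zero (M : ℕ) (y : ℝ) {i : Fin (2*M+1)} (hi : i.val ≠ 0) :
    gramDiag M y i = (2 * M + 1) / 2 * y ^ ((i.val + 1) / 2) := by
  simp [gramDiag, trigWeight, hi]

theorem gramDiag_pos (M : ℕ) {y : ℝ} (hy : 0 < y) (i : Fin (2*M+1)) : 0 < gramDiag M y i := by
  unfold gramDiag trigWeight
  split_ifs <;> positivity

theorem cond_transpose_Ttheta_mul_SR_sq (M : ℕ) {ρ R₀ : ℝ} (hx : 0 < R₀ / ρ) :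
    (‖(Ttheta M)ᵀ * SR M ρ R₀‖ * ‖((Ttheta M)ᵀ * SR M ρ R₀)⁻¹‖) ^ 2 =
      ‖gramDiag M ((R₀ / ρ) ^ 2)‖ * ‖(gramDiag M ((R₀ / ρ) ^ 2))⁻¹‖ :=
  l2_opNorm_mul_l2_opNorm_inv_sq (conjTranspose_mul_self_transpose_Ttheta_mul_SR M ρ R₀)
    fun i => (gramDiag_pos M (by positivity) i).ne'

end Gram

section Scalar

variable {M : ℕ} {y d : ℝ}

theorem two_div_le_norm_gramDiag_mul_norm_inv (hM : 1 ≤ M) (hd : 0 < d) (hdM : d ^ M = 2)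
    (hy : 0 < y) :
    2 / d ≤ ‖gramDiag M y‖ * ‖(gramDiag M y)⁻¹‖ := by
  have hN : (0 : ℝ) < 2 * M + 1 := by positivity
  have e₀ := gramDiag_apply_zero M y
  have e₁ : gramDiag M y ⟨1, by omega⟩ = (2 * M + 1) / 2 * y := by
    simp [gramDiag_apply_of_ne_zero]
  have e₂ : gramDiag M y ⟨2 * M, by omega⟩ = (2 * M + 1) / 2 * y ^ M := by
    rw [gramDiag_apply_of_ne_zero M y (by simp; omega), show (2 * M + 1) / 2 = M by omega]
  rcases le_total y d with hyd | hdy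
  · calc 2 / d ≤ 2 / y := div_le_div_of_nonneg_left zero_le_two hy hyd
      _ = gramDiag M y ⟨0, by omega⟩ / gramDiag M y ⟨1, by omega⟩ := by
          rw [e₀, e₁]; field_simp
      _ ≤ _ := div_le_pi_norm_mul_pi_norm_inv _ _ _
  · calc 2 / d = d ^ (M - 1) := by rw [pow_sub₀ d hd.ne' hM, hdM, pow_one, div_eq_mul_inv]
      _ ≤ y ^ (M - 1) := pow_le_pow_left₀ hd.le hdy _
      _ = gramDiag M y ⟨2 * M, by omega⟩ / gramDiag M y ⟨1, by omega⟩ := by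
          rw [e₂, e₁, pow_sub₀ y hy.ne' hM, pow_one]; field_simp
      _ ≤ _ := div_le_pi_norm_mul_pi_norm_inv _ _ _

theorem norm_gramDiag_mul_norm_inv_eq_two_div (hM : 1 ≤ M) (hd : 1 ≤ d) (hdM : d ^ M = 2) :
    ‖gramDiag M d‖ * ‖(gramDiag M d)⁻¹‖ = 2 / d := by
  have hN : (0 : ℝ) < 2 * M + 1 := by positivity
  have hd2 : d ≤ 2 := hdM ▸ le_self_pow₀ hd (by omega)
  have hk (i : Fin (2*M+1)) (hi : i.val ≠ 0) :
      d ≤ d ^ ((i.val + 1) / 2) ∧ d ^ ((i.val + 1) / 2) ≤ 2 :=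
    ⟨le_self_pow₀ hd (by omega), hdM ▸ pow_le_pow_right₀ hd (by omega)⟩
  have e₁ : gramDiag M d ⟨1, by omega⟩ = (2 * M + 1) / 2 * d := by
    simp [gramDiag_apply_of_ne_zero]
  rw [pi_norm_mul_pi_norm_inv_eq_div (i₀ := ⟨0, by omega⟩) (j₀ := ⟨1, by omega⟩)]
  · rw [gramDiag_apply_zero, e₁]
    field_simp
  · intro i
    by_cases hi : i.val = 0
    · rw [show i = ⟨0, by omega⟩ from Fin.ext hi]
    · rw [gramDiag_apply_of_ne_zero M d hi, gramDiag_apply_zero]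
      nlinarith [(hk i hi).2]
  · intro i
    rw [e₁]
    by_cases hi : i.val = 0
    · rw [show i = ⟨0, by omega⟩ from Fin.ext hi, gramDiag_apply_zero]
      nlinarith
    · rw [gramDiag_apply_of_ne_zero M d hi]
      nlinarith [(hk i hi).1]
  · exact gramDiag_pos M (by linarith) _

end Scalar

/-- The function `R₀ ↦ cond₂(S)` attains its minimum over `R₀ > 0` at
`R₀ = 2^{1/(2M)}ρ`, the minimum value being `2^{(M-1)/(2M)} < √2`. -/
theorem condS_min (M : ℕ) (hM : 1 ≤ M) (ρ : ℝ) (hρ : 0 < ρ) :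
    (∀ R₀ : ℝ, 0 < R₀ →
      ‖(Ttheta M)ᵀ * SR M ρ ((2 : ℝ) ^ ((1 : ℝ) / (2 * M)) * ρ)‖ *
          ‖((Ttheta M)ᵀ * SR M ρ ((2 : ℝ) ^ ((1 : ℝ) / (2 * M)) * ρ))⁻¹‖ ≤
        ‖(Ttheta M)ᵀ * SR M ρ R₀‖ * ‖((Ttheta M)ᵀ * SR M ρ R₀)⁻¹‖) ∧
    ‖(Ttheta M)ᵀ * SR M ρ ((2 : ℝ) ^ ((1 : ℝ) / (2 * M)) * ρ)‖ *
        ‖((Ttheta M)ᵀ * SR M ρ ((2 : ℝ) ^ ((1 : ℝ) / (2 * M)) * ρ))⁻¹‖ =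
      (2 : ℝ) ^ (((M : ℝ) - 1) / (2 * M)) ∧
    (2 : ℝ) ^ (((M : ℝ) - 1) / (2 * M)) < Real.sqrt 2 := by
  have hM0 : (M : ℝ) ≠ 0 := by positivity
  set c := (2 : ℝ) ^ ((1 : ℝ) / (2 * M)) with hc_def
  have hc1 : 1 < c := Real.one_lt_rpow one_lt_two (by positivity)
  have hcM : (c ^ 2) ^ M = 2 := by
    rw [← pow_mul, ← Real.rpow_natCast, hc_def, ← Real.rpow_mul zero_le_two,
      show 1 / (2 * (M : ℝ)) * ((2 * M : ℕ) : ℝ) = 1 by push_cast; field_simp, Real.rpow_one]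
  have hopt : ‖(Ttheta M)ᵀ * SR M ρ (c * ρ)‖ * ‖((Ttheta M)ᵀ * SR M ρ (c * ρ))⁻¹‖ = √2 / c := by
    rw [← sq_eq_sq₀ (by positivity) (by positivity), cond_transpose_Ttheta_mul_SR_sq M
      (by rw [mul_div_cancel_right₀ _ hρ.ne']; positivity), mul_div_cancel_right₀ _ hρ.ne',
      norm_gramDiag_mul_norm_inv_eq_two_div hM (one_le_pow₀ hc1.le) hcM, div_pow,
      Real.sq_sqrt zero_le_two]
  have hval : (2 : ℝ) ^ (((M : ℝ) - 1) / (2 * M)) = √2 / c := by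
    rw [Real.sqrt_eq_rpow, hc_def, ← Real.rpow_sub two_pos]
    congr 1
    field_simp
  refine ⟨fun R₀ hR₀ => ?_, hopt.trans hval.symm, hval ▸ div_lt_self (by positivity) hc1⟩
  rw [hopt, ← pow_le_pow_iff_left₀ (by positivity) (by positivity) two_ne_zero,
    cond_transpose_Ttheta_mul_SR_sq M (div_pos hR₀ hρ), div_pow, Real.sq_sqrt zero_le_two]
  exact two_div_le_norm_gramDiag_mul_norm_inv hM (by positivity) hcM (by positivity)
end
end
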